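/- Let S = {S_1,…,S_K} ⊂ ℂ^{d×d} with ρ(S) = 1, and let ‖·‖ be a matrix norm induced by a vector norm on ℂ^d which is extremal for S, i.e., max_{1 ≤ k ≤ K} ‖S_k‖ = 1. Let μ_* be a θ-ergodic Borel probability measure on Σ_K^+ extremal for S, and suppose μ_* has a periodic density point i' = (i'_n)_{n≥1} with period π ≥ 1 (i'_{n+π} = i'_n for all n). Then ‖(S_{i'_1} S_{i'_2} ⋯ S_{i'_π})^n‖ = 1 for every n ≥ 1, and consequently ρ(S_{i'_1}⋯S_{i'_π}) = 1 = ρ(S)^π, so S has the spectral finiteness property. -/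

import Mathlib

open Filter MeasureTheory Topology
open scoped ENNReal

noncomputable section

/-- The one-sided shift on `Σ_K^+ = ℕ → Fin K`. -/
def shift (K : ℕ) : (ℕ → Fin K) → ℕ → Fin K := fun i n => i (n + 1)

/-- The ordered product `S_{w 0} ⋯ S_{w (n-1)}` along a finite word `w`. -/
def finWordProd {d K : ℕ} (S : Fin K → Matrix (Fin d) (Fin d) ℂ) {n : ℕ}
    (w : Fin n → Fin K) : Matrix (Fin d) (Fin d) ℂ :=
  (List.ofFn fun t => S (w t)).prod

/-- The ordered product of the first `n` matrices along an infinite sequence. -/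
def wordProd {d K : ℕ} (S : Fin K → Matrix (Fin d) (Fin d) ℂ)
    (i : ℕ → Fin K) (n : ℕ) : Matrix (Fin d) (Fin d) ℂ :=
  (List.ofFn fun t : Fin n => S (i t)).prod

/-- The (usual) spectral radius of a complex matrix, as a real number. -/
def specRad {d : ℕ} (A : Matrix (Fin d) (Fin d) ℂ) : ℝ :=
  (spectralRadius ℂ A).toReal

/-- The generalized spectral radius of a finite family of matrices. -/
def genSpecRad {d K : ℕ} (S : Fin K → Matrix (Fin d) (Fin d) ℂ) : ℝ :=
  Filter.atTop.limsup fun n : ℕ =>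
    ⨆ w : Fin n → Fin K, specRad (finWordProd S w) ^ ((n : ℝ)⁻¹)

/-- A submultiplicative matrix norm on `d × d` complex matrices. -/
structure MatrixNorm (d : ℕ) where
  N : Matrix (Fin d) (Fin d) ℂ → ℝ
  nonneg : ∀ A, 0 ≤ N A
  definite : ∀ A, N A = 0 ↔ A = 0
  homog : ∀ (c : ℂ) (A), N (c • A) = ‖c‖ * N A
  triangle : ∀ A B, N (A + B) ≤ N A + N B
  submult : ∀ A B, N (A * B) ≤ N A * N B

/-- `μ` is extremal for `S` (w.r.t. the matrix norm `N`). -/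
def IsExtremal {d K : ℕ} (S : Fin K → Matrix (Fin d) (Fin d) ℂ)
    (N : Matrix (Fin d) (Fin d) ℂ → ℝ) (μ : Measure (ℕ → Fin K)) : Prop :=
  ∀ᵐ i ∂μ, Tendsto (fun n : ℕ => N (wordProd S i n) ^ ((n : ℝ)⁻¹))
    atTop (𝓝 (genSpecRad S))

/-- `x` is a density point of `μ`. -/
def DensityPoint {K : ℕ} (μ : Measure (ℕ → Fin K)) (x : ℕ → Fin K) : Prop :=
  ∀ U : Set (ℕ → Fin K), IsOpen U → x ∈ U → 0 < μ U

/-- `S` has the spectral finiteness property. -/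
def HasFinitenessProperty {d K : ℕ} (S : Fin K → Matrix (Fin d) (Fin d) ℂ) : Prop :=
  ∃ n : ℕ, 1 ≤ n ∧ ∃ w : Fin n → Fin K,
    genSpecRad S = specRad (finWordProd S w) ^ ((n : ℝ)⁻¹)

/-- `x` is periodic of period `π ≥ 1`. -/
def IsPeriodic {K : ℕ} (x : ℕ → Fin K) (π : ℕ) : Prop :=
  1 ≤ π ∧ ∀ n, x (n + π) = x n

/-- The matrix norm induced by a vector norm `Nv` on `ℂ^d`. -/
def inducedMatNorm {d : ℕ} (Nv : (Fin d → ℂ) → ℝ) (A : Matrix (Fin d) (Fin d) ℂ) : ℝ :=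
  sInf {c : ℝ | 0 ≤ c ∧ ∀ x, Nv (A.mulVec x) ≤ c * Nv x}

/-!
With `ρ(S) = 1` and an extremal norm, every product along every sequence has norm at most one.
If the prefix of length `m` of the density point `i'` had norm `β < 1`, its cylinder `C` would
have measure `α > 0`; by shift invariance, sequences visiting `C` at least `n α / 2` times before
time `n` form a set of measure at least `α / 2`, and for them the visits contain about
`n α / (2 m)` disjoint copies of the prefix, so the product of length `n + m` has norm at most
`β ^ (n α / (2 m))`. By Egorov's theorem, extremality `‖S_{i_1} ⋯ S_{i_q}‖ ^ (1 / q) → 1` is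
uniform off a set of measure `< α / 2`, which is incompatible with this exponential decay.
Hence every power of the period product has norm one, and Gelfand's formula gives it spectral
radius one.
-/

section Words

variable {d K : ℕ} (S : Fin K → Matrix (Fin d) (Fin d) ℂ)

theorem shift_iterate_apply (i : ℕ → Fin K) (a t : ℕ) : (shift K)^[a] i t = i (t + a) := by
  induction a generalizing i with
  | zero => rfl
  | succ a ih => rw [Function.iterate_succ_apply, ih]; rfl

theorem wordProd_add (i : ℕ → Fin K) (a b : ℕ) :
    wordProd S i (a + b) = wordProd S i a * wordProd S ((shift K)^[a] i) b := by
  simp only [wordProd, List.ofFn_add, List.prod_append, shift_iterate_apply]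
  congr 2 with t
  simp [Nat.add_comm a]

theorem wordProd_congr {i j : ℕ → Fin K} {n : ℕ} (h : ∀ t < n, i t = j t) :
    wordProd S i n = wordProd S j n := by
  simp only [wordProd, fun t : Fin n => h t t.isLt]

theorem wordProd_mul_period {i : ℕ → Fin K} {π : ℕ} (hi : ∀ n, i (n + π) = i n) (n : ℕ) :
    wordProd S i (n * π) = wordProd S i π ^ n := by
  have hshift : ∀ n, (shift K)^[n * π] i = i := fun n => by
    rw [Nat.mul_comm, Function.iterate_mul]
    exact Function.iterate_fixed (funext fun t => by rw [shift_iterate_apply, hi]) n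
  induction n with
  | zero => simp [wordProd]
  | succ n ih => rw [Nat.succ_mul, wordProd_add, hshift, ih, pow_succ]

end Words

section InducedNorm

-- The phantom index gives each norm `Nv` on `ℂ^d` its own normed-space instance.
def NormedVec {d : ℕ} (_Nv : (Fin d → ℂ) → ℝ) : Type := Fin d → ℂ

variable {d : ℕ} {Nv : (Fin d → ℂ) → ℝ}

namespace NormedVec

instance : AddCommGroup (NormedVec Nv) := inferInstanceAs (AddCommGroup (Fin d → ℂ))
instance : Module ℂ (NormedVec Nv) := inferInstanceAs (Module ℂ (Fin d → ℂ))
instance : FiniteDimensional ℂ (NormedVec Nv) := inferInstanceAs (FiniteDimensional ℂ (Fin d → ℂ))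
instance : Norm (NormedVec Nv) := ⟨Nv⟩

variable [hNv : Fact (NormedSpace.Core ℂ (NormedVec Nv))]

instance : NormedAddCommGroup (NormedVec Nv) := .ofCore hNv.out
instance : NormedSpace ℂ (NormedVec Nv) := .ofCore hNv.out

def toCLM : Matrix (Fin d) (Fin d) ℂ ≃ₐ[ℂ] (NormedVec Nv →L[ℂ] NormedVec Nv) :=
  (Matrix.toLinAlgEquiv' : Matrix (Fin d) (Fin d) ℂ ≃ₐ[ℂ] (NormedVec Nv →ₗ[ℂ] NormedVec Nv)).trans
    (AlgEquiv.ofLinearEquiv (LinearMap.toContinuousLinearMap :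
      (NormedVec Nv →ₗ[ℂ] NormedVec Nv) ≃ₗ[ℂ] (NormedVec Nv →L[ℂ] NormedVec Nv)) rfl fun _ _ => rfl)

end NormedVec

open NormedVec

variable [Fact (NormedSpace.Core ℂ (NormedVec Nv))]

theorem inducedMatNorm_eq_norm_toCLM (A : Matrix (Fin d) (Fin d) ℂ) :
    inducedMatNorm Nv A = ‖(toCLM A : NormedVec Nv →L[ℂ] NormedVec Nv)‖ := by
  rw [ContinuousLinearMap.norm_def]
  rfl

theorem inducedMatNorm_nonneg (A : Matrix (Fin d) (Fin d) ℂ) : 0 ≤ inducedMatNorm Nv A := by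
  rw [inducedMatNorm_eq_norm_toCLM]
  exact norm_nonneg _

theorem inducedMatNorm_mul_le (A B : Matrix (Fin d) (Fin d) ℂ) :
    inducedMatNorm Nv (A * B) ≤ inducedMatNorm Nv A * inducedMatNorm Nv B := by
  simp only [inducedMatNorm_eq_norm_toCLM, map_mul]
  exact norm_mul_le _ _

theorem inducedMatNorm_one_le : inducedMatNorm Nv (1 : Matrix (Fin d) (Fin d) ℂ) ≤ 1 := by
  rw [inducedMatNorm_eq_norm_toCLM, map_one]
  exact ContinuousLinearMap.norm_id_le

theorem specRad_eq_one_of_inducedMatNorm_pow_eq_one {A : Matrix (Fin d) (Fin d) ℂ}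
    (hA : ∀ n, 1 ≤ n → inducedMatNorm Nv (A ^ n) = 1) : specRad A = 1 := by
  have : CompleteSpace (NormedVec Nv) := FiniteDimensional.complete ℂ _
  have hgelfand := spectrum.pow_nnnorm_pow_one_div_tendsto_nhds_spectralRadius
    (toCLM A : NormedVec Nv →L[ℂ] NormedVec Nv)
  have hone : ∀ᶠ n : ℕ in atTop,
      (‖(toCLM A : NormedVec Nv →L[ℂ] NormedVec Nv) ^ n‖₊ : ℝ≥0∞) ^ (1 / n : ℝ) = 1 := by
    filter_upwards [eventually_ge_atTop 1] with n hn
    have : ‖(toCLM (A ^ n) : NormedVec Nv →L[ℂ] NormedVec Nv)‖₊ = 1 :=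
      NNReal.coe_eq_one.mp ((inducedMatNorm_eq_norm_toCLM _).symm.trans (hA n hn))
    rw [← map_pow, this, ENNReal.coe_one, ENNReal.one_rpow]
  have hρ : spectralRadius ℂ A = 1 := by
    rw [spectralRadius, ← AlgEquiv.spectrum_eq (toCLM (Nv := Nv))]
    exact tendsto_nhds_unique hgelfand (tendsto_const_nhds.congr' (hone.mono fun _ h => h.symm))
  simp [specRad, hρ]

end InducedNorm

open Classical in
def visitCount {X : Type*} (T : X → X) (C : Set X) (n : ℕ) (x : X) : ℕ :=
  ((Finset.range n).filter fun k => T^[k] x ∈ C).card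

section Contraction

variable {d K : ℕ} {S : Fin K → Matrix (Fin d) (Fin d) ℂ} {N : Matrix (Fin d) (Fin d) ℂ → ℝ}
  (hmul : ∀ A B, N (A * B) ≤ N A * N B) (hnn : ∀ A, 0 ≤ N A)
include hmul hnn

theorem norm_wordProd_le_one (hone : N 1 ≤ 1) (hS : ∀ k, N (S k) ≤ 1)
    (i : ℕ → Fin K) (q : ℕ) : N (wordProd S i q) ≤ 1 := by
  induction q with
  | zero => exact hone
  | succ q ih =>
    rw [wordProd_add]
    calc N (wordProd S i q * wordProd S ((shift K)^[q] i) 1)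
        ≤ N (wordProd S i q) * N (wordProd S ((shift K)^[q] i) 1) := hmul _ _
      _ ≤ 1 := mul_le_one₀ ih (hnn _) (by simpa [wordProd] using hS _)

variable (hword : ∀ i q, N (wordProd S i q) ≤ 1)
include hword

theorem norm_wordProd_le_pow_card {m : ℕ} (hm : 0 < m) {β : ℝ} (hβ : 0 ≤ β) (i : ℕ → Fin K)
    (q : ℕ) (P : Finset ℕ) (hsep : ∀ a ∈ P, ∀ b ∈ P, a < b → a + m ≤ b)
    (hfit : ∀ p ∈ P, p + m ≤ q) (hblock : ∀ p ∈ P, N (wordProd S ((shift K)^[p] i) m) ≤ β) :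
    N (wordProd S i q) ≤ β ^ P.card := by
  induction q using Nat.strong_induction_on generalizing P with
  | _ q ih =>
  by_cases hlast : ∃ p ∈ P, p + m = q
  · obtain ⟨p, hp, rfl⟩ := hlast
    have hmem : ∀ a ∈ P.erase p, a ∈ P := fun a => Finset.mem_of_mem_erase
    have hbefore : ∀ a ∈ P.erase p, a + m ≤ p := fun a ha => by
      have := hfit a (hmem a ha)
      have := Finset.ne_of_mem_erase ha
      exact hsep a (hmem a ha) p hp (by omega)
    have hrest : N (wordProd S i p) ≤ β ^ (P.erase p).card :=
      ih p (by omega) _ (fun a ha b hb => hsep a (hmem a ha) b (hmem b hb)) hbefore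
        (fun a ha => hblock a (hmem a ha))
    rw [wordProd_add, ← Finset.card_erase_add_one hp, pow_succ]
    exact (hmul _ _).trans (mul_le_mul hrest (hblock p hp) (hnn _) (pow_nonneg hβ _))
  · push Not at hlast
    cases q with
    | zero =>
      have hP : P = ∅ := Finset.eq_empty_of_forall_notMem fun p hp =>
        hlast p hp (Nat.le_zero.mp (hfit p hp))
      simpa [hP] using hword i 0
    | succ q =>
      have hfit' : ∀ p ∈ P, p + m ≤ q := fun p hp => by
        have := hfit p hp; have := hlast p hp; omega
      rw [wordProd_add]
      calc N (wordProd S i q * wordProd S ((shift K)^[q] i) 1)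
          ≤ N (wordProd S i q) * N (wordProd S ((shift K)^[q] i) 1) := hmul _ _
        _ ≤ β ^ P.card * 1 :=
          mul_le_mul (ih q q.lt_succ_self P hsep hfit' hblock) (hword _ _) (hnn _)
            (pow_nonneg hβ _)
        _ = β ^ P.card := mul_one _

open PiNat in
theorem norm_wordProd_pow_le_pow_visitCount {m : ℕ} (hm : 0 < m) {β : ℝ} (hβ0 : 0 ≤ β)
    (hβ1 : β ≤ 1) {x : ℕ → Fin K} (hx : N (wordProd S x m) ≤ β) (i : ℕ → Fin K) (n : ℕ) :
    N (wordProd S i (n + m)) ^ m ≤ β ^ visitCount (shift K) (cylinder x m) n i := by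
  classical
  -- Visits in one residue class mod `m` are disjoint blocks; some class holds `1/m` of them.
  set T := (Finset.range n).filter fun k => (shift K)^[k] i ∈ cylinder x m
  obtain ⟨r, -, hr⟩ := Finset.exists_le_card_fiber_of_nsmul_le_card_of_maps_to
    (s := T) (f := (· % m)) (t := Finset.range m) (b := (T.card / m : ℚ))
    (fun k _ => Finset.mem_range.mpr (Nat.mod_lt k hm)) ⟨0, Finset.mem_range.mpr hm⟩
    (by rw [Finset.card_range, nsmul_eq_mul, mul_div_cancel₀ _ (by positivity : (m : ℚ) ≠ 0)])
  set P := T.filter (· % m = r)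
  have hTP : T.card ≤ m * P.card := by
    rw [div_le_iff₀ (by positivity)] at hr
    exact_mod_cast hr.trans_eq (mul_comm _ _)
  have hsep : ∀ a ∈ P, ∀ b ∈ P, a < b → a + m ≤ b := fun a ha b hb hab => by
    have hdvd : m ∣ b - a := Nat.dvd_of_mod_eq_zero (Nat.sub_mod_eq_zero_of_mod_eq
      (((Finset.mem_filter.mp hb).2).trans (Finset.mem_filter.mp ha).2.symm))
    have := Nat.le_of_dvd (by omega) hdvd
    omega
  have hP : N (wordProd S i (n + m)) ≤ β ^ P.card := by
    refine norm_wordProd_le_pow_card hmul hnn hword hm hβ0 i _ P hsep (fun p hp => ?_)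
      (fun p hp => ?_)
    · have := Finset.mem_range.mp (Finset.mem_filter.mp (Finset.mem_filter.mp hp).1).1
      omega
    · have hcyl := (Finset.mem_filter.mp (Finset.mem_filter.mp hp).1).2
      rwa [wordProd_congr S (mem_cylinder_iff.mp hcyl)]
  calc N (wordProd S i (n + m)) ^ m ≤ (β ^ P.card) ^ m := pow_le_pow_left₀ (hnn _) hP m
    _ = β ^ (m * P.card) := by rw [← pow_mul, mul_comm]
    _ ≤ β ^ T.card := pow_le_pow_of_le_one hβ0 hβ1 hTP

end Contraction

section VisitCount

variable {X : Type*} {T : X → X} {C : Set X}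

theorem visitCount_le (n : ℕ) (x : X) : visitCount T C n x ≤ n := by
  classical
  exact (Finset.card_filter_le _ _).trans_eq (Finset.card_range n)

theorem visitCount_eq_sum_indicator (n : ℕ) (x : X) :
    (visitCount T C n x : ℝ≥0∞) = ∑ k ∈ Finset.range n, (T^[k] ⁻¹' C).indicator 1 x := by
  classical
  rw [visitCount, Finset.card_filter, Nat.cast_sum]
  refine Finset.sum_congr rfl fun k _ => ?_
  by_cases h : T^[k] x ∈ C <;> simp [h]

variable [MeasurableSpace X] {μ : Measure X}

theorem lintegral_visitCount (hT : MeasurePreserving T μ μ) (hC : MeasurableSet C) (n : ℕ) :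
    ∫⁻ x, (visitCount T C n x : ℝ≥0∞) ∂μ = n * μ C := by
  have hpre : ∀ k, MeasurableSet (T^[k] ⁻¹' C) := fun k => hT.measurable.iterate k hC
  simp only [visitCount_eq_sum_indicator]
  rw [lintegral_finsetSum _ fun k _ => measurable_one.indicator (hpre k)]
  simp only [Pi.one_def, lintegral_indicator_const (hpre _), one_mul,
    (hT.iterate _).measure_preimage hC.nullMeasurableSet, Finset.sum_const, Finset.card_range,
    nsmul_eq_mul]

theorem lintegral_le_mul_measure_add [IsProbabilityMeasure μ] {f : X → ℝ≥0∞} (hf : Measurable f)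
    {c : ℝ≥0∞} (hfc : ∀ x, f x ≤ c) (s : ℝ≥0∞) :
    ∫⁻ x, f x ∂μ ≤ c * μ {x | s ≤ f x} + s := by
  have hW : MeasurableSet {x | s ≤ f x} := measurableSet_le measurable_const hf
  calc ∫⁻ x, f x ∂μ ≤ ∫⁻ x, ({x | s ≤ f x}.indicator (fun _ => c) x + s) ∂μ := by
        refine lintegral_mono fun x => ?_
        by_cases hx : s ≤ f x
        · simpa [Set.indicator_of_mem (show x ∈ {x | s ≤ f x} from hx)] using
            le_add_right (hfc x)
        · simpa [Set.indicator_of_notMem (show x ∉ {x | s ≤ f x} from hx)] using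
            (not_le.mp hx).le
    _ = c * μ {x | s ≤ f x} + s := by
        rw [lintegral_add_right _ measurable_const, lintegral_indicator_const hW,
          lintegral_const, measure_univ, mul_one]

theorem measure_half_le_measure_visitCount_ge [IsProbabilityMeasure μ]
    (hT : MeasurePreserving T μ μ) (hC : MeasurableSet C) {n : ℕ} (hn : n ≠ 0) :
    μ C / 2 ≤ μ {x | n * μ C / 2 ≤ visitCount T C n x} := by
  set W := {x | (n : ℝ≥0∞) * μ C / 2 ≤ visitCount T C n x}
  have hmeas : Measurable fun x => (visitCount T C n x : ℝ≥0∞) := by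
    simp only [visitCount_eq_sum_indicator]
    exact Finset.measurable_sum _ fun k _ =>
      measurable_one.indicator (hT.measurable.iterate k hC)
  have hle : (n : ℝ≥0∞) * μ C ≤ n * μ W + n * μ C / 2 :=
    calc (n : ℝ≥0∞) * μ C = ∫⁻ x, (visitCount T C n x : ℝ≥0∞) ∂μ :=
          (lintegral_visitCount hT hC n).symm
      _ ≤ n * μ W + n * μ C / 2 := lintegral_le_mul_measure_add hmeas
          (fun x => by exact_mod_cast visitCount_le (T := T) (C := C) n x) _
  have hhalf : (n : ℝ≥0∞) * (μ C / 2) ≤ n * μ W := by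
    rw [← mul_div_assoc, ← ENNReal.sub_half (by finiteness)]
    exact tsub_le_iff_right.mpr hle
  exact (ENNReal.mul_le_mul_iff_right (by exact_mod_cast hn) (by finiteness)).mp hhalf

theorem exists_visitCount_ge_and_lt_of_ae_tendsto [IsProbabilityMeasure μ]
    (hT : MeasurePreserving T μ μ) (hC : MeasurableSet C) (hC0 : 0 < μ C) {f : ℕ → X → ℝ}
    (hf : ∀ q, StronglyMeasurable (f q)) (hlim : ∀ᵐ x ∂μ, Tendsto (fun q => f q x) atTop (𝓝 1))
    {γ : ℝ} (hγ : γ < 1) :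
    ∃ Q, ∀ n q, n ≠ 0 → Q ≤ q → ∃ x, n * μ C / 2 ≤ visitCount T C n x ∧ γ < f q x := by
  obtain ⟨c, hc0, hcC⟩ := exists_between (ENNReal.half_pos hC0.ne')
  obtain ⟨t, -, htc, hunif⟩ := tendstoUniformlyOn_of_ae_tendsto' hf stronglyMeasurable_const
    hlim (ENNReal.toReal_pos hc0.ne' hcC.ne_top)
  rw [ENNReal.ofReal_toReal hcC.ne_top] at htc
  obtain ⟨Q, hQ⟩ := eventually_atTop.mp
    (Metric.tendstoUniformlyOn_iff.mp hunif (1 - γ) (by linarith))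
  refine ⟨Q, fun n q hn hq => ?_⟩
  have hnsub : ¬ {x | (n : ℝ≥0∞) * μ C / 2 ≤ visitCount T C n x} ⊆ t := fun hsub =>
    (((measure_half_le_measure_visitCount_ge hT hC hn).trans (measure_mono hsub)).trans htc).not_gt
      hcC
  obtain ⟨x, hxW, hxt⟩ := Set.not_subset.mp hnsub
  have hdist := hQ q hq x hxt
  rw [Real.dist_eq, abs_lt] at hdist
  exact ⟨x, hxW, by linarith [hdist.2]⟩

end VisitCount

section DensityPoint

open PiNat

variable {d K : ℕ} {S : Fin K → Matrix (Fin d) (Fin d) ℂ}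

theorem measurable_comp_wordProd {Y : Type*} [MeasurableSpace Y]
    (g : Matrix (Fin d) (Fin d) ℂ → Y) (q : ℕ) : Measurable fun i => g (wordProd S i q) :=
  (measurable_of_countable fun w : Fin q → Fin K => g (finWordProd S w)).comp
    (measurable_pi_lambda _ fun _ => measurable_pi_apply _)

theorem norm_wordProd_eq_one_of_densityPoint {N : Matrix (Fin d) (Fin d) ℂ → ℝ}
    (hmul : ∀ A B, N (A * B) ≤ N A * N B) (hnn : ∀ A, 0 ≤ N A)
    (hword : ∀ i q, N (wordProd S i q) ≤ 1) {μ : Measure (ℕ → Fin K)} [IsProbabilityMeasure μ]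
    (hμ : MeasurePreserving (shift K) μ μ)
    (hlim : ∀ᵐ i ∂μ, Tendsto (fun q : ℕ => N (wordProd S i q) ^ ((q : ℝ)⁻¹)) atTop (𝓝 1))
    {x : ℕ → Fin K} (hx : DensityPoint μ x) {m : ℕ} (hm : 0 < m) : N (wordProd S x m) = 1 := by
  refine le_antisymm (hword x m) (not_lt.mp fun hlt => ?_)
  set β := max (N (wordProd S x m)) (1 / 2)
  have hβ0 : 0 < β := lt_max_of_lt_right (by norm_num)
  have hβ1 : β < 1 := max_lt hlt (by norm_num)
  have hC0 : 0 < μ (cylinder x m) := hx _ (isOpen_cylinder _ x m) (self_mem_cylinder x m)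
  have hm' : (0 : ℝ) < m := Nat.cast_pos.mpr hm
  set α := (μ (cylinder x m)).toReal
  have hα : 0 < α := ENNReal.toReal_pos hC0.ne' (measure_ne_top _ _)
  -- `γ ^ (q * m) = β ^ (q * α / 4)`, against the bound `β ^ (n * α / 2)` from the visits.
  set γ := β ^ (α / (4 * m))
  have hγ0 : 0 ≤ γ := Real.rpow_nonneg hβ0.le _
  have hγ1 : γ < 1 := Real.rpow_lt_one hβ0.le hβ1 (div_pos hα (by positivity))
  obtain ⟨Q, hQ⟩ := exists_visitCount_ge_and_lt_of_ae_tendsto hμ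
    (isOpen_cylinder _ x m).measurableSet hC0
    (fun q => (measurable_comp_wordProd (fun A => N A ^ ((q : ℝ)⁻¹)) q).stronglyMeasurable)
    hlim hγ1
  set n := max Q m
  have hn : 0 < n := lt_max_of_lt_right hm
  obtain ⟨i, hvisit, hgrowth⟩ := hQ n (n + m) hn.ne' (by omega)
  set M := N (wordProd S i (n + m))
  have hlower : β ^ ((n + m) * α / 4) < M ^ m := by
    have hq : (0 : ℝ) < n + m := by positivity
    calc β ^ ((n + m) * α / 4) = γ ^ (((n + m : ℕ) : ℝ) * m) := by
          rw [← Real.rpow_mul hβ0.le]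
          push_cast
          field_simp
      _ < (M ^ (((n + m : ℕ) : ℝ)⁻¹)) ^ (((n + m : ℕ) : ℝ) * m) :=
          Real.rpow_lt_rpow hγ0 hgrowth (by positivity)
      _ = M ^ m := by
          rw [← Real.rpow_mul (hnn _), inv_mul_cancel_left₀ (by positivity), Real.rpow_natCast]
  have hupper : M ^ m ≤ β ^ (n * α / 2) := by
    have hV : n * α / 2 ≤ visitCount (shift K) (cylinder x m) n i := by
      have := ENNReal.toReal_mono (ENNReal.natCast_ne_top _) hvisit
      simpa [ENNReal.toReal_div, ENNReal.toReal_mul] using this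
    calc M ^ m ≤ β ^ visitCount (shift K) (cylinder x m) n i :=
          norm_wordProd_pow_le_pow_visitCount hmul hnn hword hm hβ0.le hβ1.le
            (le_max_left _ _) i n
      _ ≤ β ^ (n * α / 2) := by
          rw [← Real.rpow_natCast]
          exact Real.rpow_le_rpow_of_exponent_ge hβ0 hβ1.le hV
  have hexp : (n : ℝ) * α / 2 < (n + m) * α / 4 :=
    (Real.rpow_lt_rpow_left_iff_of_base_lt_one hβ0 hβ1).mp (hlower.trans_le hupper)
  have hmn : (m : ℝ) ≤ n := by exact_mod_cast le_max_right Q m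
  nlinarith

end DensityPoint

theorem finiteness_of_periodic_density_point_general
    {d K : ℕ}
    (S : Fin K → Matrix (Fin d) (Fin d) ℂ)
    (Nv : (Fin d → ℂ) → ℝ)
    (hNnn : ∀ x, 0 ≤ Nv x)
    (hNdef : ∀ x, (Nv x = 0 ↔ x = 0))
    (hNhom : ∀ (c : ℂ) (x), Nv (c • x) = ‖c‖ * Nv x)
    (hNtri : ∀ x y, Nv (x + y) ≤ Nv x + Nv y)
    (hρ : genSpecRad S = 1)
    (hextnorm : (⨆ k : Fin K, inducedMatNorm Nv (S k)) = 1)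
    (μ : Measure (ℕ → Fin K)) [IsProbabilityMeasure μ]
    (hergo : Ergodic (shift K) μ) (hext : IsExtremal S (inducedMatNorm Nv) μ)
    (i' : ℕ → Fin K) (π : ℕ) (hper : IsPeriodic i' π) (hdens : DensityPoint μ i') :
    (∀ n : ℕ, 1 ≤ n →
      inducedMatNorm Nv ((finWordProd S fun t : Fin π => i' t) ^ n) = 1) ∧
    specRad (finWordProd S fun t : Fin π => i' t) = 1 ∧
    specRad (finWordProd S fun t : Fin π => i' t) = genSpecRad S ^ π ∧
    HasFinitenessProperty S := by
  have : Fact (NormedSpace.Core ℂ (NormedVec Nv)) := ⟨⟨⟨hNnn, hNhom, hNtri⟩, hNdef⟩⟩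
  have hS : ∀ k, inducedMatNorm Nv (S k) ≤ 1 := fun k =>
    hextnorm ▸ le_ciSup (Set.finite_range fun k => inducedMatNorm Nv (S k)).bddAbove k
  have hword := norm_wordProd_le_one inducedMatNorm_mul_le inducedMatNorm_nonneg
    inducedMatNorm_one_le hS
  have hlim : ∀ᵐ i ∂μ, Tendsto (fun q : ℕ => inducedMatNorm Nv (wordProd S i q) ^ ((q : ℝ)⁻¹))
      atTop (𝓝 1) := hρ ▸ hext
  have hpow : ∀ n : ℕ, 1 ≤ n →
      inducedMatNorm Nv ((finWordProd S fun t : Fin π => i' t) ^ n) = 1 := fun n hn => by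
    rw [show finWordProd S (fun t : Fin π => i' t) = wordProd S i' π from rfl,
      ← wordProd_mul_period S hper.2]
    exact norm_wordProd_eq_one_of_densityPoint inducedMatNorm_mul_le inducedMatNorm_nonneg hword
      hergo.toMeasurePreserving hlim hdens (Nat.mul_pos hn hper.1)
  have hspec := specRad_eq_one_of_inducedMatNorm_pow_eq_one hpow
  exact ⟨hpow, hspec, by rw [hspec, hρ, one_pow], π, hper.1, _, by rw [hρ, hspec, Real.one_rpow]⟩

/-- If `ρ(S) = 1`, `‖·‖` is an extremal induced matrix norm for `S`, and an extremal
ergodic probability measure `μ` for `S` has a periodic density point `i'` of period `π`,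
then all powers of `S_{i'_1} ⋯ S_{i'_π}` have norm one; consequently
`ρ(S_{i'_1} ⋯ S_{i'_π}) = 1 = ρ(S)^π` and `S` has the spectral finiteness property. -/
theorem finiteness_of_periodic_density_point
    {d K : ℕ} (hd : 2 ≤ d) (hK : 2 ≤ K)
    (S : Fin K → Matrix (Fin d) (Fin d) ℂ)
    (Nv : (Fin d → ℂ) → ℝ)
    (hNnn : ∀ x, 0 ≤ Nv x)
    (hNdef : ∀ x, (Nv x = 0 ↔ x = 0))
    (hNhom : ∀ (c : ℂ) (x), Nv (c • x) = ‖c‖ * Nv x)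
    (hNtri : ∀ x y, Nv (x + y) ≤ Nv x + Nv y)
    (hρ : genSpecRad S = 1)
    (hextnorm : (⨆ k : Fin K, inducedMatNorm Nv (S k)) = 1)
    (μ : Measure (ℕ → Fin K)) [IsProbabilityMeasure μ]
    (hergo : Ergodic (shift K) μ) (hext : IsExtremal S (inducedMatNorm Nv) μ)
    (i' : ℕ → Fin K) (π : ℕ) (hper : IsPeriodic i' π) (hdens : DensityPoint μ i') :
    (∀ n : ℕ, 1 ≤ n →
      inducedMatNorm Nv ((finWordProd S fun t : Fin π => i' t) ^ n) = 1) ∧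
    specRad (finWordProd S fun t : Fin π => i' t) = 1 ∧
    specRad (finWordProd S fun t : Fin π => i' t) = genSpecRad S ^ π ∧
    HasFinitenessProperty S :=
  finiteness_of_periodic_density_point_general S Nv hNnn hNdef hNhom hNtri hρ hextnorm μ hergo hext
    i' π hper hdens
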